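/- Let f : ℝ^d → ℝ be continuous with 0 < h_f(x₀) < 1, where h_f(x₀) is the pointwise Hölder exponent at x₀. Let λ_j(x₀) be the dyadic cube of width 2^{−j} containing x₀ and 3λ_j(x₀) the concentric cube three times wider. Then h_f(x₀) = liminf_{j→∞} log(Os_f(3λ_j(x₀)))/log(2^{−j}). -/

import Mathlib

open Filter Set

/-- The oscillation of `f` on a set `S`. -/
noncomputable def osc {d : ℕ} (f : (Fin d → ℝ) → ℝ) (S : Set (Fin d → ℝ)) : ℝ :=
  sSup (f '' S) - sInf (f '' S)

/-- The set of Hölder exponents of `f` at `x₀` (for exponents `< 1` the Taylor polynomial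
reduces to `f(x₀)`). -/
def holderSet {d : ℕ} (f : (Fin d → ℝ) → ℝ) (x₀ : Fin d → ℝ) : Set ℝ :=
  {γ : ℝ | 0 ≤ γ ∧ ∃ C R : ℝ, 0 < C ∧ 0 < R ∧
    ∀ x, ‖x - x₀‖ ≤ R → |f x - f x₀| ≤ C * ‖x - x₀‖ ^ γ}

/-- The pointwise Hölder exponent of `f` at `x₀`. -/
noncomputable def holderExponent {d : ℕ} (f : (Fin d → ℝ) → ℝ) (x₀ : Fin d → ℝ) : ℝ :=
  sSup (holderSet f x₀)

/-- The cube `3λ_j(x₀)`: the dyadic cube of width `2^{−j}` containing `x₀`, enlarged to the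
concentric cube three times wider. -/
def tripleDyadicCube {d : ℕ} (j : ℕ) (x₀ : Fin d → ℝ) : Set (Fin d → ℝ) :=
  {x | ∀ i, ((⌊x₀ i * 2 ^ j⌋ : ℝ) - 1) / 2 ^ j ≤ x i ∧ x i ≤ ((⌊x₀ i * 2 ^ j⌋ : ℝ) + 2) / 2 ^ j}

/-! The cube `3λ_j(x₀)` lies between the sup-norm balls of radii `2^{-j}` and `2·2^{-j}` about `x₀`.
A Hölder bound of exponent `γ` thus gives `Os_f(3λ_j(x₀)) ≤ K·2^{-jγ}` for large `j`, so the ratio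
is eventually at least `γ - O(1/j)`. Conversely, if `γ` is not a Hölder exponent, every ball about
`x₀` contains a point with `|f x - f x₀| > |x - x₀|^γ`; at the dyadic scale `j` of that point,
`Os_f(3λ_j(x₀)) ≥ 2^{-(j+1)γ}`, so the ratio is at most `γ(1 + 1/j)` for infinitely many `j`. -/

open Metric Topology

lemma eq_liminf_of_forall_eventually_ge_of_forall_frequently_le {α : Type*} {l : Filter α}
    {u : α → ℝ} {c : ℝ} (hge : ∀ a < c, ∀ᶠ n in l, a ≤ u n)
    (hle : ∀ b > c, ∃ᶠ n in l, u n ≤ b) :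
    c = liminf u l := by
  have hbdd : IsBoundedUnder (· ≥ ·) l u := ⟨c - 1, hge _ (by linarith)⟩
  have hcobdd : IsCoboundedUnder (· ≥ ·) l u := .of_frequently_le (hle (c + 1) (by linarith))
  refine le_antisymm ?_ ?_
  · exact le_of_forall_lt_imp_le_of_dense fun a ha => le_liminf_of_le hcobdd (hge a ha)
  · exact le_of_forall_gt_imp_ge_of_dense fun b hb => liminf_le_of_frequently_le (hle b hb) hbdd

lemma Icc_subset_Icc_floor_div (a : ℝ) {n : ℝ} (hn : 0 < n) :
    Icc (a - n⁻¹) (a + n⁻¹) ⊆ Icc ((⌊a * n⌋ - 1) / n) ((⌊a * n⌋ + 2) / n) := by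
  have hlo := Int.floor_le (a * n)
  have hhi := Int.lt_floor_add_one (a * n)
  refine Icc_subset_Icc ?_ ?_
  · rw [div_le_iff₀ hn, sub_mul, inv_mul_cancel₀ hn.ne']; linarith
  · rw [le_div_iff₀ hn, add_mul, inv_mul_cancel₀ hn.ne']; linarith

lemma Icc_floor_div_subset_Icc (a : ℝ) {n : ℝ} (hn : 0 < n) :
    Icc ((⌊a * n⌋ - 1) / n) ((⌊a * n⌋ + 2) / n) ⊆ Icc (a - 2 * n⁻¹) (a + 2 * n⁻¹) := by
  have hlo := Int.floor_le (a * n)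
  have hhi := Int.lt_floor_add_one (a * n)
  refine Icc_subset_Icc ?_ ?_
  · rw [le_div_iff₀ hn, sub_mul, mul_assoc, inv_mul_cancel₀ hn.ne']; linarith
  · rw [div_le_iff₀ hn, add_mul, mul_assoc, inv_mul_cancel₀ hn.ne']; linarith

section TripleDyadicCube

variable {d : ℕ} (j : ℕ) (x₀ : Fin d → ℝ)

lemma tripleDyadicCube_eq_pi :
    tripleDyadicCube j x₀ =
      univ.pi fun i =>
        Icc (((⌊x₀ i * 2 ^ j⌋ : ℝ) - 1) / 2 ^ j) (((⌊x₀ i * 2 ^ j⌋ : ℝ) + 2) / 2 ^ j) := by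
  ext x
  simp only [tripleDyadicCube, mem_ofPred_eq, Set.mem_pi, mem_univ, mem_Icc, forall_const]

lemma isCompact_tripleDyadicCube : IsCompact (tripleDyadicCube j x₀) := by
  rw [tripleDyadicCube_eq_pi]
  exact isCompact_univ_pi fun _ => isCompact_Icc

lemma closedBall_subset_tripleDyadicCube :
    closedBall x₀ ((2 ^ j)⁻¹) ⊆ tripleDyadicCube j x₀ := by
  rw [closedBall_pi _ (by positivity), tripleDyadicCube_eq_pi]
  exact pi_mono fun i _ => by
    rw [Real.closedBall_eq_Icc]
    exact Icc_subset_Icc_floor_div _ (by positivity)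

lemma tripleDyadicCube_subset_closedBall :
    tripleDyadicCube j x₀ ⊆ closedBall x₀ (2 * (2 ^ j)⁻¹) := by
  rw [closedBall_pi _ (by positivity), tripleDyadicCube_eq_pi]
  exact pi_mono fun i _ => by
    rw [Real.closedBall_eq_Icc]
    exact Icc_floor_div_subset_Icc _ (by positivity)

lemma self_mem_tripleDyadicCube : x₀ ∈ tripleDyadicCube j x₀ :=
  closedBall_subset_tripleDyadicCube j x₀ (mem_closedBall_self (by positivity))

end TripleDyadicCube

section Oscillation

variable {d : ℕ} {f : (Fin d → ℝ) → ℝ} {S : Set (Fin d → ℝ)}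

lemma abs_sub_le_osc (hS : Bornology.IsBounded (f '' S)) {x y : Fin d → ℝ} (hx : x ∈ S)
    (hy : y ∈ S) : |f x - f y| ≤ osc f S := by
  have hsup (z) (hz : z ∈ S) : f z ≤ sSup (f '' S) := le_csSup hS.bddAbove (mem_image_of_mem f hz)
  have hinf (z) (hz : z ∈ S) : sInf (f '' S) ≤ f z := csInf_le hS.bddBelow (mem_image_of_mem f hz)
  rw [abs_le, osc]
  constructor <;> linarith [hsup x hx, hsup y hy, hinf x hx, hinf y hy]

lemma osc_le_two_mul {x₀ : Fin d → ℝ} (hx₀ : x₀ ∈ S) {ε : ℝ}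
    (hε : ∀ x ∈ S, |f x - f x₀| ≤ ε) : osc f S ≤ 2 * ε := by
  have hne : (f '' S).Nonempty := ⟨f x₀, mem_image_of_mem f hx₀⟩
  have hsup : sSup (f '' S) ≤ f x₀ + ε :=
    csSup_le hne <| forall_mem_image.2 fun x hx => by linarith [(abs_le.1 (hε x hx)).2]
  have hinf : f x₀ - ε ≤ sInf (f '' S) :=
    le_csInf hne <| forall_mem_image.2 fun x hx => by linarith [(abs_le.1 (hε x hx)).1]
  rw [osc]
  linarith

end Oscillation

section HolderSet

variable {d : ℕ} {f : (Fin d → ℝ) → ℝ} {x₀ : Fin d → ℝ} {γ : ℝ}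

lemma Ici_subset_holderSet_of_eqOn {R : ℝ} (hR : 0 < R)
    (hf : ∀ x ∈ closedBall x₀ R, f x = f x₀) : Ici 0 ⊆ holderSet f x₀ := by
  refine fun γ hγ => ⟨hγ, 1, R, one_pos, hR, fun x hx => ?_⟩
  rw [hf x (mem_closedBall_iff_norm.2 hx), sub_self, abs_zero, one_mul]
  positivity

lemma osc_tripleDyadicCube_pos (hf : Continuous f) (hbdd : BddAbove (holderSet f x₀)) (j : ℕ) :
    0 < osc f (tripleDyadicCube j x₀) := by
  by_contra! hosc
  refine not_bddAbove_Ici 0 (hbdd.mono (Ici_subset_holderSet_of_eqOn (R := (2 ^ j)⁻¹)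
    (by positivity) fun x hx => ?_))
  have hbound := ((isCompact_tripleDyadicCube j x₀).image hf).isBounded
  have hx' := abs_sub_le_osc hbound (closedBall_subset_tripleDyadicCube j x₀ hx)
    (self_mem_tripleDyadicCube j x₀)
  exact sub_eq_zero.1 (abs_nonpos_iff.1 (hx'.trans hosc))

lemma exists_osc_tripleDyadicCube_le_of_mem_holderSet (hγ : γ ∈ holderSet f x₀) :
    ∃ K, ∀ᶠ j in atTop, osc f (tripleDyadicCube j x₀) ≤ K * ((2 : ℝ) ^ j)⁻¹ ^ γ := by
  obtain ⟨hγ0, C, R, hC, hR, hHolder⟩ := hγ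
  have hsmall : ∀ᶠ j : ℕ in atTop, 2 * ((2 : ℝ) ^ j)⁻¹ ≤ R := by
    have : Tendsto (fun j : ℕ => 2 * ((2 : ℝ) ^ j)⁻¹) atTop (𝓝 0) := by
      simpa [inv_pow] using (tendsto_pow_atTop_nhds_zero_of_lt_one (r := (2 : ℝ)⁻¹)
        (by norm_num) (by norm_num)).const_mul 2
    exact this.eventually (eventually_le_nhds hR)
  refine ⟨2 * (C * 2 ^ γ), hsmall.mono fun j hj => (osc_le_two_mul
    (self_mem_tripleDyadicCube j x₀) fun x hx => ?_).trans_eq (mul_assoc _ _ _).symm⟩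
  have hx' := mem_closedBall_iff_norm.1 (tripleDyadicCube_subset_closedBall j x₀ hx)
  calc |f x - f x₀| ≤ C * ‖x - x₀‖ ^ γ := hHolder x (hx'.trans hj)
    _ ≤ C * (2 * ((2 : ℝ) ^ j)⁻¹) ^ γ := by gcongr
    _ = C * 2 ^ γ * ((2 : ℝ) ^ j)⁻¹ ^ γ := by
      rw [Real.mul_rpow (by norm_num) (by positivity), mul_assoc]

lemma exists_ge_rpow_le_osc_tripleDyadicCube_of_notMem_holderSet (hf : Continuous f)
    (hγ0 : 0 ≤ γ) (hγ : γ ∉ holderSet f x₀) (N : ℕ) :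
    ∃ j ≥ N, ((2 : ℝ) ^ (j + 1))⁻¹ ^ γ ≤ osc f (tripleDyadicCube j x₀) := by
  obtain ⟨x, hxN, hx⟩ : ∃ x, ‖x - x₀‖ ≤ ((2 : ℝ) ^ N)⁻¹ ∧ ‖x - x₀‖ ^ γ < |f x - f x₀| := by
    by_contra! h
    exact hγ ⟨hγ0, 1, ((2 : ℝ) ^ N)⁻¹, one_pos, by positivity, by simpa using h⟩
  have hr : 0 < ‖x - x₀‖ := by
    refine norm_pos_iff.2 (sub_ne_zero.2 fun hxx => ?_)
    subst hxx
    simp only [sub_self, norm_zero, abs_zero] at hx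
    exact hx.not_ge (by positivity)
  obtain ⟨j, hj_lo, hj_hi⟩ := exists_nat_pow_near_of_lt_one hr
    (hxN.trans (inv_le_one_of_one_le₀ (one_le_pow₀ one_le_two))) (by norm_num : (0 : ℝ) < 2⁻¹)
    (by norm_num)
  rw [inv_pow] at hj_lo hj_hi
  refine ⟨j, ?_, ?_⟩
  · have hpow : (2 : ℝ) ^ N < 2 ^ (j + 1) :=
      (inv_lt_inv₀ (by positivity) (by positivity)).1 (hj_lo.trans_le hxN)
    have := (pow_lt_pow_iff_right₀ one_lt_two).1 hpow
    omega
  · have hbound := ((isCompact_tripleDyadicCube j x₀).image hf).isBounded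
    calc ((2 : ℝ) ^ (j + 1))⁻¹ ^ γ ≤ ‖x - x₀‖ ^ γ := by gcongr
      _ ≤ |f x - f x₀| := hx.le
      _ ≤ osc f (tripleDyadicCube j x₀) :=
        abs_sub_le_osc hbound (closedBall_subset_tripleDyadicCube j x₀
          (mem_closedBall_iff_norm.2 hj_hi)) (self_mem_tripleDyadicCube j x₀)

end HolderSet

lemma log_two_zpow_neg (j : ℕ) : Real.log ((2 : ℝ) ^ (-(j : ℤ))) = -(j * Real.log 2) := by
  rw [Real.log_zpow]
  push_cast
  ring

section LogRatio

variable {o γ : ℝ} {j : ℕ}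

lemma sub_div_le_log_div_log_two_zpow_neg {K : ℝ} (hj : 0 < j) (ho : 0 < o)
    (hle : o ≤ K * ((2 : ℝ) ^ j)⁻¹ ^ γ) :
    γ - Real.log K / (j * Real.log 2) ≤ Real.log o / Real.log ((2 : ℝ) ^ (-(j : ℤ))) := by
  have hL : 0 < (j : ℝ) * Real.log 2 := by positivity
  have hK : 0 < K := pos_of_mul_pos_left (ho.trans_le hle) (by positivity)
  have hlog : Real.log o ≤ Real.log K - γ * (j * Real.log 2) :=
    calc Real.log o ≤ Real.log (K * ((2 : ℝ) ^ j)⁻¹ ^ γ) := Real.log_le_log ho hle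
      _ = _ := by
        rw [Real.log_mul hK.ne' (by positivity), Real.log_rpow (by positivity), Real.log_inv,
          Real.log_pow]
        ring
  rw [log_two_zpow_neg, div_neg, ← neg_div, le_div_iff₀ hL, sub_mul, div_mul_cancel₀ _ hL.ne']
  linarith

lemma log_div_log_two_zpow_neg_le (hj : 0 < j) (hle : ((2 : ℝ) ^ (j + 1))⁻¹ ^ γ ≤ o) :
    Real.log o / Real.log ((2 : ℝ) ^ (-(j : ℤ))) ≤ γ + γ / j := by
  have hL : 0 < (j : ℝ) * Real.log 2 := by positivity
  have hlog : -(γ * ((j + 1) * Real.log 2)) ≤ Real.log o :=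
    calc -(γ * ((j + 1) * Real.log 2)) = Real.log (((2 : ℝ) ^ (j + 1))⁻¹ ^ γ) := by
          rw [Real.log_rpow (by positivity), Real.log_inv, Real.log_pow]
          push_cast
          ring
      _ ≤ Real.log o := Real.log_le_log (by positivity) hle
  have hscale : (γ + γ / j) * (j * Real.log 2) = γ * ((j + 1) * Real.log 2) := by
    field_simp
  rw [log_two_zpow_neg, div_neg, ← neg_div, div_le_iff₀ hL, hscale]
  linarith

end LogRatio

section HolderExponent

variable {d : ℕ} {f : (Fin d → ℝ) → ℝ} {x₀ : Fin d → ℝ} {γ : ℝ}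

lemma eventually_le_log_osc_div_of_mem_holderSet (hf : Continuous f)
    (hbdd : BddAbove (holderSet f x₀)) (hγ : γ ∈ holderSet f x₀) {a : ℝ} (ha : a < γ) :
    ∀ᶠ j : ℕ in atTop,
      a ≤ Real.log (osc f (tripleDyadicCube j x₀)) / Real.log ((2 : ℝ) ^ (-(j : ℤ))) := by
  obtain ⟨K, hK⟩ := exists_osc_tripleDyadicCube_le_of_mem_holderSet hγ
  have hlim : Tendsto (fun j : ℕ => γ - Real.log K / (j * Real.log 2)) atTop (𝓝 γ) := by
    simpa using tendsto_const_nhds.sub <| tendsto_const_nhds.div_atTop <|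
      tendsto_natCast_atTop_atTop.atTop_mul_const (Real.log_pos one_lt_two)
  filter_upwards [hK, hlim.eventually_const_lt ha, eventually_gt_atTop 0] with j hj hlt hj0
  exact hlt.le.trans <|
    sub_div_le_log_div_log_two_zpow_neg hj0 (osc_tripleDyadicCube_pos hf hbdd j) hj

lemma frequently_log_osc_div_le_of_notMem_holderSet (hf : Continuous f) (hγ0 : 0 ≤ γ)
    (hγ : γ ∉ holderSet f x₀) {b : ℝ} (hb : γ < b) :
    ∃ᶠ j : ℕ in atTop,
      Real.log (osc f (tripleDyadicCube j x₀)) / Real.log ((2 : ℝ) ^ (-(j : ℤ))) ≤ b := by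
  have hlim : Tendsto (fun j : ℕ => γ + γ / j) atTop (𝓝 γ) := by
    simpa using tendsto_const_nhds.add <|
      tendsto_const_nhds.div_atTop (tendsto_natCast_atTop_atTop (R := ℝ))
  obtain ⟨M, hM⟩ := eventually_atTop.1 ((hlim.eventually_lt_const hb).and (eventually_gt_atTop 0))
  refine frequently_atTop.2 fun N => ?_
  obtain ⟨j, hjN, hosc⟩ :=
    exists_ge_rpow_le_osc_tripleDyadicCube_of_notMem_holderSet hf hγ0 hγ (max N M)
  obtain ⟨hlt, hj0⟩ := hM j (le_of_max_le_right hjN)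
  exact ⟨j, le_of_max_le_left hjN, (log_div_log_two_zpow_neg_le hj0 hosc).trans hlt.le⟩

end HolderExponent

theorem holderExponent_eq_liminf_osc_general {d : ℕ} (f : (Fin d → ℝ) → ℝ) (x₀ : Fin d → ℝ)
    (hf : Continuous f) (h0 : 0 < holderExponent f x₀) :
    holderExponent f x₀ =
      liminf (fun j : ℕ =>
        Real.log (osc f (tripleDyadicCube j x₀)) / Real.log ((2 : ℝ) ^ (-(j : ℤ)))) atTop := by
  -- `sSup` of an unbounded or empty set of reals is `0`.
  have hbdd : BddAbove (holderSet f x₀) := by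
    by_contra h
    exact h0.ne' (Real.sSup_of_not_bddAbove h)
  have hne : (holderSet f x₀).Nonempty := by
    by_contra h
    exact h0.ne' (by rw [holderExponent, not_nonempty_iff_eq_empty.1 h, Real.sSup_empty])
  refine eq_liminf_of_forall_eventually_ge_of_forall_frequently_le (fun a ha => ?_)
    (fun b hb => ?_)
  · obtain ⟨γ, hγ, haγ⟩ := exists_lt_of_lt_csSup hne ha
    exact eventually_le_log_osc_div_of_mem_holderSet hf hbdd hγ haγ
  · have hγ : holderExponent f x₀ < (holderExponent f x₀ + b) / 2 := by linarith
    exact frequently_log_osc_div_le_of_notMem_holderSet hf (h0.le.trans hγ.le)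
      (notMem_of_csSup_lt hγ hbdd) (by linarith)

/-- For a continuous function with `0 < h_f(x₀) < 1`, the pointwise Hölder exponent is given by
the liminf of `log Os_f(3λ_j(x₀)) / log 2^{−j}`. -/
theorem holderExponent_eq_liminf_osc {d : ℕ} (f : (Fin d → ℝ) → ℝ) (x₀ : Fin d → ℝ)
    (hf : Continuous f) (h0 : 0 < holderExponent f x₀) (h1 : holderExponent f x₀ < 1) :
    holderExponent f x₀ =
      liminf (fun j : ℕ =>
        Real.log (osc f (tripleDyadicCube j x₀)) / Real.log ((2 : ℝ) ^ (-(j : ℤ)))) atTop :=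
  holderExponent_eq_liminf_osc_general f x₀ hf h0
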